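/- Let G be a generalized theta graph consisting of two vertices u and v joined by at least three internally vertex-disjoint paths, such that every internal path (i.e., every component of G − {u, v}) has an odd number of vertices. Let L be a list assignment on G with |L(x)| = 4 for every vertex x, write L(u) = {c_0, c_1, c_2, c_3} and L(v) = {c'_0, c'_1, c'_2, c'_3} indexed so that c'_j = c_j whenever c_j ∈ L(u) ∩ L(v). Then every internal path P blocks at most 2 of the six simple pairs; and if an internal path P blocks exactly 2 simple pairs, then S_L(P) = 2|V(P)| + 2 and P has exactly one heavy couple and exactly two light couples. -/

import Mathlib

/-!
Everything decomposes over colours. For a colour `x` with membership pattern `b` along the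
path, the number of sets `X_i` containing `x` depends only on `b`: it is at least the number of
odd-indexed vertices `v_i` whose list contains `x`, and, even after `x` is deleted from the
two end lists, at least the number of even-indexed ones. Summing over colours, with all
lists of size 4 and `n = |V(P)|` odd, gives `S_L(P) ≥ 2n + 2` and
`dam(p, q) ≤ S_L(P) − 2n + 2` for all `p, q`. Distinct couples involve disjoint colours, so
damages add up over couples: with `D = S_L(P) − 2n ≥ 2`, the couple damages `d_j ∈ [0, 2]`
sum to at most `D + 2`, while a blocked simple pair `{j, k}` needs `d_j + d_k > D`.
A finite check over the possible `d` finishes the proof.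
-/

/-- Given the lists `L(v_1), …, L(v_n)` of a path (as a list of finsets, in order) and a
"previous" set, the sequence `X_1 = L(v_1)`, `X_i = L(v_i) \ X_{i-1}`. -/
def Xseq : Finset ℕ → List (Finset ℕ) → List (Finset ℕ)
  | _, [] => []
  | prev, l :: ls => (l \ prev) :: Xseq (l \ prev) ls

/-- `S_L(P) = Σ_{i=1}^n |X_i|`. -/
def SL (ls : List (Finset ℕ)) : ℕ := ((Xseq ∅ ls).map Finset.card).sum

/-- `X_{i+1}` (0-indexed access to the sequence `X_1, …, X_n`). -/
def Xat (ls : List (Finset ℕ)) (i : ℕ) : Finset ℕ := (Xseq ∅ ls).getD i ∅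

/-- `A = ∩_{x ∈ V(P)} L(x)`. -/
def Aset : List (Finset ℕ) → Finset ℕ
  | [] => ∅
  | a :: rest => rest.foldl (· ∩ ·) a

/-- For a colour `c`, the least 0-indexed position `i` with `c ∉ L(v_{i+1})`
(so the paper's `f(c)` is `firstMissing + 1`). -/
noncomputable def firstMissing (ls : List (Finset ℕ)) (c : ℕ) : ℕ :=
  sInf {i | i < ls.length ∧ c ∉ ls.getD i ∅}

open Classical in
/-- `X̂_1 = { c ∈ L(v_1) \ A : f(c) is even }` (with the paper's 1-indexed `f`,
i.e. `firstMissing` is odd). -/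
noncomputable def hatX1 (ls : List (Finset ℕ)) : Finset ℕ :=
  (ls.getD 0 ∅ \ Aset ls).filter fun c => Odd (firstMissing ls c)

/-- `X̂_n = X_n \ A`. -/
def hatXn (ls : List (Finset ℕ)) : Finset ℕ := Xat ls (ls.length - 1) \ Aset ls

/-- `L[p,q]`: delete the colours of `p` from `L(v_1)` and the colours of `q` from `L(v_n)`. -/
def delEnds (p q : Finset ℕ) (ls : List (Finset ℕ)) : List (Finset ℕ) :=
  ((ls.modifyHead (· \ p)).reverse.modifyHead (· \ q)).reverse

/-- The damage `dam_{L,P}(p,q) = S_L(P) − S_{L[p,q]}(P)` (as an integer). -/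
def damZ (ls : List (Finset ℕ)) (p q : Finset ℕ) : ℤ :=
  (SL ls : ℤ) - SL (delEnds p q ls)

/-- The path `v_1 ⋯ v_n` with lists `L(v_1), …, L(v_n)` admits a `b`-tuple list
colouring: consecutive vertices receive disjoint `b`-subsets of their lists. -/
def PathListColorable (b : ℕ) (ls : List (Finset ℕ)) : Prop :=
  ∃ f : ℕ → Finset ℕ,
    (∀ i, i < ls.length → f i ⊆ ls.getD i ∅ ∧ (f i).card = b) ∧
    (∀ i, i + 1 < ls.length → Disjoint (f i) (f (i + 1)))

open Finset

def List.everyOther {α : Type*} : List α → List α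
  | [] => []
  | [a] => [a]
  | a :: _ :: l => a :: everyOther l

namespace List

variable {α β : Type*}

@[simp] lemma everyOther_nil : ([] : List α).everyOther = [] := rfl

lemma everyOther_sublist (l : List α) : l.everyOther <+ l := by
  induction l using everyOther.induct with
  | case1 => exact .slnil
  | case2 => exact .refl _
  | case3 a b l ih => exact (ih.cons b).cons_cons a

lemma everyOther_map (f : α → β) (l : List α) : (l.map f).everyOther = l.everyOther.map f := by
  induction l using everyOther.induct with
  | case1 | case2 => rfl
  | case3 a b l ih => simp [everyOther, ih]

lemma length_everyOther (l : List α) : l.everyOther.length = (l.length + 1) / 2 := by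
  induction l using everyOther.induct with
  | case1 | case2 => simp [everyOther]
  | case3 a b l ih => simp [everyOther, ih]; omega

lemma everyOther_append_singleton {l : List α} (hl : Odd l.length) (a : α) :
    (l ++ [a]).everyOther = l.everyOther := by
  induction l using everyOther.induct with
  | case1 => simp at hl
  | case2 => rfl
  | case3 b c l ih =>
    simp only [length_cons, Nat.odd_add_one, Nat.not_odd_iff_even, Nat.not_even_iff_odd] at hl
    simp [everyOther, ih hl]

end List

/-- The number of sets among `X_1, …, X_n` containing a colour whose memberships in
`L(v_1), …, L(v_n)` are `b`, given its membership `prev` in the set preceding `X_1`. -/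
def occurrences : Bool → List Bool → ℕ
  | _, [] => 0
  | prev, x :: b => (x && !prev).toNat + occurrences (x && !prev) b

@[simp] lemma occurrences_nil (prev : Bool) : occurrences prev [] = 0 := rfl

@[simp] lemma occurrences_true_cons (x : Bool) (b : List Bool) :
    occurrences true (x :: b) = occurrences false b := by
  simp [occurrences]

@[simp] lemma occurrences_false_cons (x : Bool) (b : List Bool) :
    occurrences false (x :: b) = x.toNat + occurrences x b := by
  simp [occurrences]

lemma occurrences_true_le_false_le_succ (b : List Bool) :
    occurrences true b ≤ occurrences false b ∧ occurrences false b ≤ occurrences true b + 1 := by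
  induction b with
  | nil => simp
  | cons x b ih => cases x <;> simp; omega

lemma occurrences_le_cons_le_add (x : Bool) (b : List Bool) :
    occurrences false b ≤ occurrences false (x :: b) ∧
      occurrences false (x :: b) ≤ occurrences false b + x.toNat := by
  have := occurrences_true_le_false_le_succ b
  cases x <;> simp; omega

lemma occurrences_le_append_singleton_le_add (prev : Bool) (b : List Bool) (y : Bool) :
    occurrences prev b ≤ occurrences prev (b ++ [y]) ∧
      occurrences prev (b ++ [y]) ≤ occurrences prev b + y.toNat := by
  induction b generalizing prev with
  | nil => cases y <;> cases prev <;> simp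
  | cons x b ih =>
    have := ih (x && !prev)
    simp only [List.cons_append, occurrences]
    omega

lemma count_everyOther_le_occurrences (b : List Bool) :
    b.everyOther.count true ≤ occurrences false b := by
  induction b using List.everyOther.induct with
  | case1 => simp
  | case2 x => cases x <;> simp [List.everyOther]
  | case3 x y b ih =>
    have := occurrences_true_le_false_le_succ (y :: b)
    cases x <;> simp [List.everyOther] at this ⊢ <;> omega

/-- `delEnds` as seen by a single colour: `s` and `t` say whether it is deleted from the
first and from the last list. -/
def clearEnds (s t : Bool) (b : List Bool) : List Bool :=
  ((b.modifyHead (· && !s)).reverse.modifyHead (· && !t)).reverse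

@[simp] lemma clearEnds_false_false (b : List Bool) : clearEnds false false b = b := by
  simp only [clearEnds, Bool.not_false, Bool.and_true]
  rw [show (fun x : Bool => x) = id from rfl, List.modifyHead_id]
  simp

lemma clearEnds_singleton (s t x : Bool) : clearEnds s t [x] = [x && !s && !t] := rfl

lemma clearEnds_cons_append_singleton (s t x : Bool) (w : List Bool) (y : Bool) :
    clearEnds s t (x :: (w ++ [y])) = (x && !s) :: (w ++ [y && !t]) := by
  simp [clearEnds]

def colourDamage (s t : Bool) (b : List Bool) : ℤ :=
  occurrences false b - occurrences false (clearEnds s t b)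

@[simp] lemma colourDamage_false_false (b : List Bool) : colourDamage false false b = 0 := by
  simp [colourDamage]

lemma occurrences_cons_and_not (x s : Bool) (r : List Bool) :
    occurrences false ((x && !s) :: r) ≤ occurrences false (x :: r) ∧
      occurrences false (x :: r) ≤ occurrences false ((x && !s) :: r) + s.toNat := by
  have := occurrences_le_cons_le_add x r
  cases x <;> cases s <;> simp at this ⊢; omega

lemma occurrences_append_and_not (r : List Bool) (y t : Bool) :
    occurrences false (r ++ [y && !t]) ≤ occurrences false (r ++ [y]) ∧
      occurrences false (r ++ [y]) ≤ occurrences false (r ++ [y && !t]) + t.toNat := by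
  have := occurrences_le_append_singleton_le_add false r y
  have := occurrences_le_append_singleton_le_add false r false
  cases y <;> cases t <;> simp at *; omega

lemma colourDamage_nonneg_and_le (s t : Bool) (b : List Bool) :
    0 ≤ colourDamage s t b ∧ colourDamage s t b ≤ s.toNat + t.toNat := by
  rcases b with _ | ⟨x, r⟩
  · simp only [colourDamage, clearEnds, List.modifyHead_nil, List.reverse_nil, sub_self]
    exact ⟨le_rfl, by positivity⟩
  rcases r.eq_nil_or_concat with rfl | ⟨w, y, rfl⟩
  · cases x <;> cases s <;> cases t <;> simp [colourDamage, clearEnds_singleton]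
  rw [colourDamage, List.concat_eq_append, clearEnds_cons_append_singleton]
  have hhead := occurrences_cons_and_not x s (w ++ [y && !t])
  have htail := occurrences_append_and_not (x :: w) y t
  simp only [List.cons_append] at htail
  omega

lemma colourDamage_le_occurrences_sub_count (s t : Bool) {b : List Bool} (hb : Odd b.length) :
    colourDamage s t b ≤ occurrences false b - b.tail.everyOther.count true := by
  suffices b.tail.everyOther.count true ≤ occurrences false (clearEnds s t b) by
    rw [colourDamage]; omega
  rcases b with _ | ⟨x, r⟩
  · simp at hb
  rcases r.eq_nil_or_concat with rfl | ⟨w, y, rfl⟩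
  · simp
  have hw : Odd w.length := by simpa [Nat.odd_add_one] using hb
  rw [List.concat_eq_append, clearEnds_cons_append_singleton, List.tail_cons,
    List.everyOther_append_singleton hw]
  calc w.everyOther.count true ≤ occurrences false w := count_everyOther_le_occurrences w
    _ ≤ occurrences false (w ++ [y && !t]) := (occurrences_le_append_singleton_le_add _ _ _).1
    _ ≤ _ := (occurrences_le_cons_le_add _ _).1


def memPattern (x : ℕ) (ls : List (Finset ℕ)) : List Bool := ls.map fun l => decide (x ∈ l)

@[simp] lemma memPattern_nil (x : ℕ) : memPattern x [] = [] := rfl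

@[simp] lemma memPattern_cons (x : ℕ) (l : Finset ℕ) (ls : List (Finset ℕ)) :
    memPattern x (l :: ls) = decide (x ∈ l) :: memPattern x ls := rfl

lemma sum_toNat_decide_mem {U l : Finset ℕ} (hl : l ⊆ U) :
    ∑ x ∈ U, (decide (x ∈ l)).toNat = l.card := by
  simp only [Bool.toNat, Bool.cond_decide]
  exact (card_eq_sum_ite hl).symm

section Decomposition

variable {U : Finset ℕ}

lemma sum_card_eq_sum_count {ls : List (Finset ℕ)} (hU : ∀ l ∈ ls, l ⊆ U) :
    (ls.map card).sum = ∑ x ∈ U, (memPattern x ls).count true := by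
  induction ls with
  | nil => simp
  | cons l ls ih =>
    simp only [List.map_cons, List.sum_cons, memPattern_cons, List.count_cons, beq_iff_eq,
      decide_eq_true_eq, sum_add_distrib]
    rw [ih fun l' hl' => hU l' (List.mem_cons_of_mem _ hl'), add_comm]
    congr 1
    exact card_eq_sum_ite (hU l (by simp))

lemma sum_card_Xseq {ls : List (Finset ℕ)} (hU : ∀ l ∈ ls, l ⊆ U) (prev : Finset ℕ) :
    ((Xseq prev ls).map card).sum = ∑ x ∈ U, occurrences (decide (x ∈ prev)) (memPattern x ls) := by
  induction ls generalizing prev with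
  | nil => simp [Xseq]
  | cons l ls ih =>
    have hsdiff (x : ℕ) : (decide (x ∈ l) && !decide (x ∈ prev)) = decide (x ∈ l \ prev) := by
      simp
    simp only [Xseq, List.map_cons, List.sum_cons, memPattern_cons, occurrences, hsdiff,
      sum_add_distrib, sum_toNat_decide_mem ((sdiff_subset).trans (hU l (by simp)))]
    rw [ih fun l' hl' => hU l' (List.mem_cons_of_mem _ hl')]

lemma SL_eq_sum {ls : List (Finset ℕ)} (hU : ∀ l ∈ ls, l ⊆ U) :
    SL ls = ∑ x ∈ U, occurrences false (memPattern x ls) := by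
  simp [SL, sum_card_Xseq hU]

lemma memPattern_delEnds (x : ℕ) (p q : Finset ℕ) (ls : List (Finset ℕ)) :
    memPattern x (delEnds p q ls) = clearEnds (decide (x ∈ p)) (decide (x ∈ q)) (memPattern x ls) := by
  have hmap : ∀ (r : Finset ℕ) (ls : List (Finset ℕ)), memPattern x (ls.modifyHead (· \ r)) =
      (memPattern x ls).modifyHead (· && !decide (x ∈ r)) := by
    intro r ls
    cases ls <;> simp [Finset.mem_sdiff]
  simp only [delEnds, clearEnds, memPattern, List.map_reverse] at hmap ⊢
  rw [hmap, List.map_reverse, hmap]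

lemma subset_of_mem_delEnds {ls : List (Finset ℕ)} (hU : ∀ l ∈ ls, l ⊆ U) (p q : Finset ℕ) :
    ∀ l ∈ delEnds p q ls, l ⊆ U := by
  have hmod : ∀ (r : Finset ℕ) (ls : List (Finset ℕ)), (∀ l ∈ ls, l ⊆ U) →
      ∀ l ∈ ls.modifyHead (· \ r), l ⊆ U := by
    intro r ls hU
    cases ls with
    | nil => simp
    | cons a ls =>
      simp only [List.modifyHead_cons, List.mem_cons, forall_eq_or_imp]
      exact ⟨sdiff_subset.trans (hU a (by simp)), fun l hl => hU l (by simp [hl])⟩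
  intro l hl
  simp only [delEnds, List.mem_reverse] at hl
  exact hmod q _ (fun l hl => hmod p ls hU l (List.mem_reverse.1 hl)) l hl

lemma damZ_eq_sum {ls : List (Finset ℕ)} (hU : ∀ l ∈ ls, l ⊆ U) (p q : Finset ℕ) :
    damZ ls p q = ∑ x ∈ U, colourDamage (decide (x ∈ p)) (decide (x ∈ q)) (memPattern x ls) := by
  simp only [damZ, colourDamage, SL_eq_sum hU, SL_eq_sum (subset_of_mem_delEnds hU p q),
    memPattern_delEnds, Nat.cast_sum, sum_sub_distrib]

end Decomposition

lemma exists_forall_subset (ls : List (Finset ℕ)) : ∃ U : Finset ℕ, ∀ l ∈ ls, l ⊆ U :=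
  ⟨ls.toFinset.sup id, fun _ hl => le_sup (f := id) (List.mem_toFinset.2 hl)⟩

lemma sum_card_everyOther_le_SL (ls : List (Finset ℕ)) : (ls.everyOther.map card).sum ≤ SL ls := by
  obtain ⟨U, hU⟩ := exists_forall_subset ls
  rw [sum_card_eq_sum_count fun l hl => hU l ((List.everyOther_sublist ls).subset hl),
    SL_eq_sum hU]
  refine sum_le_sum fun x _ => ?_
  rw [memPattern, ← List.everyOther_map]
  exact count_everyOther_le_occurrences _

lemma damZ_le_SL_sub {ls : List (Finset ℕ)} (hodd : Odd ls.length) (p q : Finset ℕ) :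
    damZ ls p q ≤ SL ls - (ls.tail.everyOther.map card).sum := by
  obtain ⟨U, hU⟩ := exists_forall_subset ls
  have hsub : ∀ l ∈ ls.tail.everyOther, l ⊆ U := fun l hl =>
    hU l (((List.everyOther_sublist _).trans (List.tail_sublist ls)).subset hl)
  rw [damZ_eq_sum hU, SL_eq_sum hU, sum_card_eq_sum_count hsub]
  push_cast
  rw [← sum_sub_distrib]
  refine sum_le_sum fun x _ => ?_
  simp only [memPattern, ← List.everyOther_map, List.map_tail]
  exact colourDamage_le_occurrences_sub_count _ _ (by simpa using hodd)

lemma damZ_nonneg (ls : List (Finset ℕ)) (p q : Finset ℕ) : 0 ≤ damZ ls p q := by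
  obtain ⟨U, hU⟩ := exists_forall_subset ls
  rw [damZ_eq_sum hU]
  exact sum_nonneg fun x _ => (colourDamage_nonneg_and_le _ _ _).1

lemma damZ_le_card_add_card (ls : List (Finset ℕ)) (p q : Finset ℕ) :
    damZ ls p q ≤ p.card + q.card := by
  obtain ⟨U, hU⟩ := exists_forall_subset ls
  rw [damZ_eq_sum (U := U ∪ (p ∪ q)) fun l hl => (hU l hl).trans subset_union_left]
  calc _ ≤ ∑ x ∈ U ∪ (p ∪ q), ((decide (x ∈ p)).toNat + (decide (x ∈ q)).toNat : ℤ) :=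
        sum_le_sum fun x _ => (colourDamage_nonneg_and_le _ _ _).2
    _ = p.card + q.card := by
        rw [sum_add_distrib]
        exact_mod_cast congrArg₂ (· + ·)
          (sum_toNat_decide_mem (subset_union_left.trans subset_union_right))
          (sum_toNat_decide_mem (subset_union_right.trans subset_union_right))

lemma damZ_union (ls : List (Finset ℕ)) {p q p' q' : Finset ℕ}
    (hdisj : Disjoint (p ∪ q) (p' ∪ q')) :
    damZ ls (p ∪ p') (q ∪ q') = damZ ls p q + damZ ls p' q' := by
  obtain ⟨U, hU⟩ := exists_forall_subset ls
  rw [damZ_eq_sum hU, damZ_eq_sum hU, damZ_eq_sum hU, ← sum_add_distrib]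
  refine sum_congr rfl fun x _ => ?_
  by_cases hx : x ∈ p ∪ q
  · have hx' : x ∉ p' ∪ q' := disjoint_left.1 hdisj hx
    simp only [mem_union, not_or] at hx'
    simp [hx'.1, hx'.2]
  · simp only [mem_union, not_or] at hx
    simp [hx.1, hx.2]

lemma damZ_biUnion (ls : List (Finset ℕ)) {ι : Type*} [DecidableEq ι] (s : Finset ι)
    {p q : ι → Finset ℕ} (hdisj : Pairwise fun j k => Disjoint (p j ∪ q j) (p k ∪ q k)) :
    damZ ls (s.biUnion p) (s.biUnion q) = ∑ j ∈ s, damZ ls (p j) (q j) := by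
  induction s using Finset.induction_on with
  | empty =>
    obtain ⟨U, hU⟩ := exists_forall_subset ls
    simp [damZ_eq_sum hU]
  | insert a s ha ih =>
    have hdisj' : Disjoint (p a ∪ q a) (s.biUnion p ∪ s.biUnion q) := by
      simp only [disjoint_union_right, disjoint_biUnion_right]
      exact ⟨fun j hj => (hdisj (ne_of_mem_of_not_mem hj ha).symm).mono_right subset_union_left,
        fun j hj => (hdisj (ne_of_mem_of_not_mem hj ha).symm).mono_right subset_union_right⟩
    rw [biUnion_insert, biUnion_insert, damZ_union ls hdisj', sum_insert ha, ih]

lemma sum_map_card_eq_mul_length {ls : List (Finset ℕ)} {k : ℕ} (h : ∀ l ∈ ls, l.card = k) :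
    (ls.map card).sum = k * ls.length := by
  rw [List.map_congr_left h, List.map_const', List.sum_replicate, smul_eq_mul, mul_comm]

lemma card_pairs_with_sum_gt_le_two (d : Fin 4 → ℤ) (D : ℤ) (hd0 : ∀ j, 0 ≤ d j)
    (hd2 : ∀ j, d j ≤ 2) (hsum : ∑ j, d j ≤ D + 2) (hD : 2 ≤ D) :
    let blocked := (powersetCard 2 (univ : Finset (Fin 4))).filter fun s => D < ∑ j ∈ s, d j
    blocked.card ≤ 2 ∧
      (blocked.card = 2 → D = 2 ∧ #{j | d j = 2} = 1 ∧ #{j | d j = 1} = 2) := by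
  intro blocked
  -- For `D ≥ 4` no pair sum exceeds `D`; otherwise only finitely many cases remain.
  rcases (by omega : D = 2 ∨ D = 3 ∨ 4 ≤ D) with rfl | rfl | hD4
  rotate_right
  · have hempty : blocked = ∅ := filter_eq_empty_iff.2 fun s hs => by
      have hle : ∑ j ∈ s, d j ≤ 4 := by
        simpa [(mem_powersetCard.1 hs).2] using sum_le_card_nsmul s d 2 fun j _ => hd2 j
      omega
    simp [hempty]
  all_goals
    obtain ⟨e, rfl⟩ : ∃ e : Fin 4 → Fin 3, d = fun j => (e j : ℤ) :=
      ⟨fun j => ⟨(d j).toNat, by grind⟩, funext fun j => by simp [hd0 j]⟩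
    revert e
    decide

lemma pairwise_disjoint_couples {α ι : Type*} [DecidableEq α] {Lu Lv : Finset α} {c c' : ι → α}
    (hcinj : Function.Injective c) (hc'inj : Function.Injective c')
    (hcu : ∀ j, c j ∈ Lu) (hc'v : ∀ j, c' j ∈ Lv) (hmatch : ∀ j, c j ∈ Lu ∩ Lv → c' j = c j) :
    Pairwise fun j k => Disjoint ({c j} ∪ {c' j} : Finset α) ({c k} ∪ {c' k}) := by
  have hcross : ∀ j k, c j = c' k → j = k := fun j k h =>
    hc'inj ((hmatch j (mem_inter.2 ⟨hcu j, h ▸ hc'v k⟩)).trans h)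
  intro j k hjk
  rw [disjoint_left]
  intro x hxj hxk
  simp only [mem_union, mem_singleton] at hxj hxk
  rcases hxj with rfl | rfl <;> rcases hxk with h | h
  exacts [hjk (hcinj h), hjk (hcross _ _ h), hjk (hcross _ _ h.symm).symm, hjk (hc'inj h)]

theorem card_blocked_simple_pairs_le_two {ls : List (Finset ℕ)} (hodd : Odd ls.length)
    (hcard : ∀ l ∈ ls, l.card = 4) {c c' : Fin 4 → ℕ}
    (hcouples : Pairwise fun j k => Disjoint ({c j} ∪ {c' j} : Finset ℕ) ({c k} ∪ {c' k})) :
    let blocked := (powersetCard 2 (univ : Finset (Fin 4))).filter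
      fun s => (SL ls : ℤ) - 2 * ls.length < damZ ls (s.image c) (s.image c')
    blocked.card ≤ 2 ∧
      (blocked.card = 2 →
        SL ls = 2 * ls.length + 2 ∧
        #{j | damZ ls {c j} {c' j} = 2} = 1 ∧ #{j | damZ ls {c j} {c' j} = 1} = 2) := by
  have himage (s : Finset (Fin 4)) :
      damZ ls (s.image c) (s.image c') = ∑ j ∈ s, damZ ls {c j} {c' j} := by
    rw [← biUnion_singleton, ← biUnion_singleton]
    exact damZ_biUnion ls s hcouples
  have hlen := sum_map_card_eq_mul_length (ls := ls.everyOther) fun l hl =>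
    hcard l ((List.everyOther_sublist ls).subset hl)
  have hlen' := sum_map_card_eq_mul_length (ls := ls.tail.everyOther) fun l hl =>
    hcard l (((List.everyOther_sublist _).trans (List.tail_sublist ls)).subset hl)
  simp only [List.length_everyOther, List.length_tail] at hlen hlen'
  have hSL := sum_card_everyOther_le_SL ls
  have hdam := damZ_le_SL_sub hodd (univ.image c) (univ.image c')
  obtain ⟨n, hn⟩ := hodd
  simp only [himage]
  have key := card_pairs_with_sum_gt_le_two (fun j => damZ ls {c j} {c' j}) (SL ls - 2 * ls.length)
    (fun j => damZ_nonneg ls _ _) (fun j => (damZ_le_card_add_card ls _ _).trans (by simp))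
    (by rw [← himage]; omega) (by omega)
  exact ⟨key.1, fun h => (key.2 h).imp_left (by omega)⟩

theorem internal_path_blocks_at_most_two_general
    (V : Type) (G : SimpleGraph V) (u v : V)
    (ι : Type)
    (P : ι → G.Walk u v)
    (hoddint : ∀ i, 2 ≤ (P i).length → Odd ((P i).length - 1))
    (L : V → Finset ℕ) (hL : ∀ x, (L x).card = 4)
    (c c' : Fin 4 → ℕ)
    (hcinj : Function.Injective c) (hc'inj : Function.Injective c')
    (hcu : Finset.image c Finset.univ = L u)
    (hc'v : Finset.image c' Finset.univ = L v)
    (hmatch : ∀ j, c j ∈ L u ∩ L v → c' j = c j) :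
    ∀ i, 2 ≤ (P i).length →
      -- the lists along the internal path of `P i` (its interior, in order)
      let ls := ((P i).support.tail.dropLast).map L
      -- the simple pairs blocked by this internal path
      let blocked := (Finset.powersetCard 2 (Finset.univ : Finset (Fin 4))).filter
        fun s => (SL ls : ℤ) - 2 * ls.length < damZ ls (s.image c) (s.image c')
      blocked.card ≤ 2 ∧
        (blocked.card = 2 →
          SL ls = 2 * ls.length + 2 ∧
          (Finset.univ.filter fun j : Fin 4 => damZ ls {c j} {c' j} = 2).card = 1 ∧
          (Finset.univ.filter fun j : Fin 4 => damZ ls {c j} {c' j} = 1).card = 2) := by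
  intro i hi
  have hodd : Odd (((P i).support.tail.dropLast).map L).length := by
    simpa [List.length_dropLast] using hoddint i hi
  exact card_blocked_simple_pairs_le_two hodd (List.forall_mem_map.2 fun x _ => hL x)
    (pairwise_disjoint_couples hcinj hc'inj (fun j => hcu ▸ mem_image_of_mem c (mem_univ j))
      (fun j => hc'v ▸ mem_image_of_mem c' (mem_univ j)) hmatch)

/-- Lemma `lem:intblock`: let `G` be a generalized theta graph consisting of two vertices
`u ≠ v` joined by at least three internally vertex-disjoint paths `P i`, covering all
vertices and edges of `G`, in which every internal path (component of `G − {u,v}`,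
i.e. the interior of any `P i` of length ≥ 2) has an odd number of vertices. Let `L`
assign 4 colours to every vertex, with `L u = {c 0, c 1, c 2, c 3}` and
`L v = {c' 0, c' 1, c' 2, c' 3}` indexed so that `c' j = c j` whenever
`c j ∈ L u ∩ L v`. Then every internal path blocks at most 2 of the six simple pairs,
and if it blocks exactly 2 of them, then `S_L(P) = 2|V(P)| + 2` and `P` has exactly one
heavy couple and exactly two light couples. -/
theorem internal_path_blocks_at_most_two
    (V : Type) (G : SimpleGraph V) (u v : V) (huv : u ≠ v)
    (ι : Type) [Fintype ι] (hι : 3 ≤ Fintype.card ι)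
    (P : ι → G.Walk u v) (hpath : ∀ i, (P i).IsPath)
    (hint : ∀ i j, i ≠ j → ∀ x, x ∈ (P i).support → x ∈ (P j).support →
      x = u ∨ x = v)
    (hcover : ∀ x : V, ∃ i, x ∈ (P i).support)
    (hecover : ∀ e ∈ G.edgeSet, ∃ i, e ∈ (P i).edges)
    (hoddint : ∀ i, 2 ≤ (P i).length → Odd ((P i).length - 1))
    (L : V → Finset ℕ) (hL : ∀ x, (L x).card = 4)
    (c c' : Fin 4 → ℕ)
    (hcinj : Function.Injective c) (hc'inj : Function.Injective c')
    (hcu : Finset.image c Finset.univ = L u)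
    (hc'v : Finset.image c' Finset.univ = L v)
    (hmatch : ∀ j, c j ∈ L u ∩ L v → c' j = c j) :
    ∀ i, 2 ≤ (P i).length →
      -- the lists along the internal path of `P i` (its interior, in order)
      let ls := ((P i).support.tail.dropLast).map L
      -- the simple pairs blocked by this internal path
      let blocked := (Finset.powersetCard 2 (Finset.univ : Finset (Fin 4))).filter
        fun s => (SL ls : ℤ) - 2 * ls.length < damZ ls (s.image c) (s.image c')
      blocked.card ≤ 2 ∧
        (blocked.card = 2 →
          SL ls = 2 * ls.length + 2 ∧
          (Finset.univ.filter fun j : Fin 4 => damZ ls {c j} {c' j} = 2).card = 1 ∧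
          (Finset.univ.filter fun j : Fin 4 => damZ ls {c j} {c' j} = 1).card = 2) :=
  internal_path_blocks_at_most_two_general V G u v ι P hoddint L hL c c' hcinj hc'inj hcu hc'v
    hmatch
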